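/- arXiv:2112.07937 — 4 statements merged into one kernel-verified Lean document; each statement's English description precedes it below -/
import Mathlib

section
/- Let G be a free group with basis {g_j : j ∈ J} and Fox derivatives D_j of ℤ[G]. Let H be a subgroup of G with free basis {x_i : i ∈ I} and corresponding Fox derivatives ∂_i of ℤ[H]. Then for every v ∈ H one has the chain rule D_j(v) = Σ_k D_j(x_k)·∂_k(v) in ℤ[G]. -/
/-!
Restricted to `F`, a Fox derivative of `ℤ[F]` is a crossed homomorphism `F → ℤ[F]` for right
multiplication. As functions of `v ∈ H`, both sides of the chain rule are therefore crossed
homomorphisms `H → ℤ[G]` for right multiplication through `φ` (the right side is a sum of images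
of the `∂_k`, finite because `∂_k v = 0` unless the `k`-th basis letter occurs in `v`), and they
agree on the basis `x_i`. A crossed homomorphism on a free group is determined by its values on a
basis.
-/

open MonoidAlgebra

/-- The augmentation homomorphism `ℤ[F] → ℤ`. -/
noncomputable def aug (J : Type) : MonoidAlgebra ℤ (FreeGroup J) →ₐ[ℤ] ℤ :=
  MonoidAlgebra.lift ℤ ℤ (FreeGroup J) 1

/-- `D` is the Fox derivative of `ℤ[FreeGroup J]` with respect to the generator `k`. -/
structure IsFoxDeriv (J : Type) [DecidableEq J] (k : J)
    (D : MonoidAlgebra ℤ (FreeGroup J) → MonoidAlgebra ℤ (FreeGroup J)) : Prop where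
  map_add : ∀ u v, D (u + v) = D u + D v
  leibniz : ∀ u v, D (u * v) = D u * v + aug J u • D v
  on_gen : ∀ j : J, D (MonoidAlgebra.of ℤ (FreeGroup J) (FreeGroup.of j)) =
      if k = j then 1 else 0

theorem MonoidAlgebra.mapDomainAlgHom_of {R A M N : Type*} [CommSemiring R] [Semiring A]
    [Algebra R A] [Monoid M] [Monoid N] (f : M →* N) (g : M) :
    mapDomainAlgHom R A f (of A M g) = of A N (f g) := by
  simp only [of_apply, mapDomainAlgHom_apply, mapDomain_single]

def IsCrossedHom {G R : Type*} [Monoid G] [Semiring R] (ρ : G →* R) (c : G → R) : Prop :=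
  ∀ g h, c (g * h) = c g * ρ h + c h

namespace IsCrossedHom

section Semiring

variable {G R : Type*} [Monoid G] [Semiring R] {ρ : G →* R} {c : G → R}

theorem const_mul (hc : IsCrossedHom ρ c) (a : R) : IsCrossedHom ρ fun g => a * c g := by
  intro g h
  dsimp only
  rw [hc, mul_add, mul_assoc]

theorem comp_ringHom {S : Type*} [Semiring S] (hc : IsCrossedHom ρ c) (f : R →+* S)
    {ρ' : G →* S} (hρ : ∀ g, f (ρ g) = ρ' g) : IsCrossedHom ρ' (f ∘ c) := by
  intro g h
  simp only [Function.comp_apply, hc g h, map_add, map_mul, hρ]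

theorem comp_monoidHom {H : Type*} [Monoid H] (hc : IsCrossedHom ρ c) (f : H →* G) :
    IsCrossedHom (ρ.comp f) (c ∘ f) := by
  intro g h
  simp only [Function.comp_apply, MonoidHom.comp_apply, map_mul]
  exact hc _ _

theorem finsum {K : Type*} {c : K → G → R} (hc : ∀ k, IsCrossedHom ρ (c k))
    (hfin : ∀ g, (fun k => c k g).HasFiniteSupport) :
    IsCrossedHom ρ fun g => ∑ᶠ k, c k g := by
  intro g h
  simp only [hc _ g h]
  have hg := hfin g
  have hh := hfin h
  rw [finsum_add_distrib (by fun_prop) hh, finsum_mul' _ _ hg]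

end Semiring

section Ring

variable {G R : Type*} [Ring R] {c : G → R}

theorem map_one [Monoid G] {ρ : G →* R} (hc : IsCrossedHom ρ c) : c 1 = 0 := by
  have h := hc 1 1
  rw [mul_one, ρ.map_one, mul_one] at h
  exact left_eq_add.mp h

theorem map_inv [Group G] {ρ : G →* R} (hc : IsCrossedHom ρ c) (g : G) :
    c g⁻¹ = -(c g * ρ g⁻¹) := by
  have h := hc g g⁻¹
  rw [mul_inv_cancel, hc.map_one] at h
  exact eq_neg_of_add_eq_zero_right h.symm

end Ring

section FreeGroup

variable {α R : Type*} [Ring R] {ρ : FreeGroup α →* R}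

theorem freeGroup_ext {c c' : FreeGroup α → R} (hc : IsCrossedHom ρ c)
    (hc' : IsCrossedHom ρ c') (h : ∀ a, c (FreeGroup.of a) = c' (FreeGroup.of a)) : c = c' := by
  funext g
  induction g using FreeGroup.induction_on with
  | C1 => rw [hc.map_one, hc'.map_one]
  | of a => exact h a
  | inv_of a ih => rw [hc.map_inv, hc'.map_inv, ih]
  | mul u w ihu ihw => rw [hc, hc', ihu, ihw]

theorem hasFiniteSupport_freeGroup {K : Type*} {c : K → FreeGroup α → R}
    (hc : ∀ k, IsCrossedHom ρ (c k))
    (hgen : ∀ a, (fun k => c k (FreeGroup.of a)).HasFiniteSupport) (g : FreeGroup α) :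
    (fun k => c k g).HasFiniteSupport := by
  induction g using FreeGroup.induction_on with
  | C1 => simp only [fun k => (hc k).map_one]; fun_prop
  | of a => exact hgen a
  | inv_of a ih => simp only [fun k => (hc k).map_inv]; fun_prop
  | mul u w ihu ihw => simp only [fun k => hc k u w]; fun_prop

end FreeGroup

end IsCrossedHom

theorem aug_of (J : Type) (g : FreeGroup J) : aug J (of ℤ (FreeGroup J) g) = 1 := by
  simp [aug]

namespace IsFoxDeriv

variable {J : Type} [DecidableEq J]

theorem isCrossedHom {k : J}
    {D : MonoidAlgebra ℤ (FreeGroup J) → MonoidAlgebra ℤ (FreeGroup J)} (hD : IsFoxDeriv J k D) :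
    IsCrossedHom (of ℤ (FreeGroup J)) fun g => D (of ℤ (FreeGroup J) g) := by
  intro g h
  dsimp only
  rw [map_mul, hD.leibniz, aug_of, one_smul]

theorem hasFiniteSupport
    {D : J → MonoidAlgebra ℤ (FreeGroup J) → MonoidAlgebra ℤ (FreeGroup J)}
    (hD : ∀ k, IsFoxDeriv J k (D k)) (g : FreeGroup J) :
    (fun k => D k (of ℤ (FreeGroup J) g)).HasFiniteSupport := by
  refine IsCrossedHom.hasFiniteSupport_freeGroup (fun k => (hD k).isCrossedHom) (fun a => ?_) g
  refine (Set.finite_singleton a).subset (Function.support_subset_iff'.mpr fun k hk => ?_)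
  rw [(hD k).on_gen, if_neg (Set.mem_singleton_iff.not.mp hk)]

end IsFoxDeriv

theorem fox_deriv_chain_rule_general (J I : Type) [DecidableEq J] [DecidableEq I]
    (D : J → MonoidAlgebra ℤ (FreeGroup J) → MonoidAlgebra ℤ (FreeGroup J))
    (hD : ∀ j, IsFoxDeriv J j (D j))
    (Dd : I → MonoidAlgebra ℤ (FreeGroup I) → MonoidAlgebra ℤ (FreeGroup I))
    (hDd : ∀ i, IsFoxDeriv I i (Dd i))
    (φ : FreeGroup I →* FreeGroup J)
    (x : I → FreeGroup J) (hx : ∀ i, φ (FreeGroup.of i) = x i)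
    (v : FreeGroup I) (j : J) :
    D j (MonoidAlgebra.of ℤ (FreeGroup J) (φ v)) =
      ∑ᶠ k : I, D j (MonoidAlgebra.of ℤ (FreeGroup J) (x k)) *
        MonoidAlgebra.mapDomainAlgHom ℤ ℤ φ (Dd k (MonoidAlgebra.of ℤ (FreeGroup I) v)) := by
  set ψ := MonoidAlgebra.mapDomainAlgHom ℤ ℤ φ
  have lhs := (hD j).isCrossedHom.comp_monoidHom φ
  have rhs : IsCrossedHom ((of ℤ (FreeGroup J)).comp φ) fun g =>
      ∑ᶠ k, D j (of ℤ (FreeGroup J) (x k)) * ψ (Dd k (of ℤ (FreeGroup I) g)) :=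
    IsCrossedHom.finsum (fun k =>
        ((hDd k).isCrossedHom.comp_ringHom ψ.toRingHom (mapDomainAlgHom_of φ)).const_mul _)
      (fun g => ((IsFoxDeriv.hasFiniteSupport hDd g).fun_comp (map_zero ψ)).mul_right _)
  refine congrFun (lhs.freeGroup_ext rhs fun i => ?_) v
  simp only [Function.comp_apply, hx]
  rw [finsum_eq_single _ i fun k hk => by rw [(hDd k).on_gen, if_neg hk, map_zero, mul_zero],
    (hDd i).on_gen, if_pos rfl, map_one, mul_one]

/-- Chain rule for Fox derivatives: if `H` is a free subgroup of the free group `G`,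
embedded via `φ : FreeGroup I →* FreeGroup J` (injective, with `φ` of the `i`-th basis
element of `H` being `x i`), then for `v ∈ H` one has
`D_j(v) = Σ_k D_j(x_k)·Dd_k(v)` in `ℤ[G]`. -/
theorem fox_deriv_chain_rule (J I : Type) [DecidableEq J] [DecidableEq I]
    (D : J → MonoidAlgebra ℤ (FreeGroup J) → MonoidAlgebra ℤ (FreeGroup J))
    (hD : ∀ j, IsFoxDeriv J j (D j))
    (Dd : I → MonoidAlgebra ℤ (FreeGroup I) → MonoidAlgebra ℤ (FreeGroup I))
    (hDd : ∀ i, IsFoxDeriv I i (Dd i))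
    (φ : FreeGroup I →* FreeGroup J) (hφ : Function.Injective φ)
    (x : I → FreeGroup J) (hx : ∀ i, φ (FreeGroup.of i) = x i)
    (v : FreeGroup I) (j : J) :
    D j (MonoidAlgebra.of ℤ (FreeGroup J) (φ v)) =
      ∑ᶠ k : I, D j (MonoidAlgebra.of ℤ (FreeGroup J) (x k)) *
        MonoidAlgebra.mapDomainAlgHom ℤ ℤ φ (Dd k (MonoidAlgebra.of ℤ (FreeGroup I) v)) :=
  fox_deriv_chain_rule_general J I D hD Dd hDd φ x hx v j
end

section
/- Let G be a nilpotent torsion-free group and x, y ∈ G. If xᵗyⁿ = yⁿxᵗ for some nonzero integers t, n, then xy = yx. -/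
/-- Old Mathlib `Monoid.IsTorsionFree` (removed upstream), with its original definition. -/
def Monoid.IsTorsionFree (G : Type*) [Monoid G] : Prop :=
  ∀ g : G, g ≠ 1 → ¬IsOfFinOrder g

/-!
Fix `y` and a nonzero `n`, and show by induction on `k` that every `v` in the `k`-th term of the
upper central series which commutes with `yⁿ` commutes with `y`. The commutator `c = ⁅v, y⁆` lies
one term lower and commutes with `yⁿ`, hence with `y` by induction. Then `v y v⁻¹ = c y` gives
`yⁿ = v yⁿ v⁻¹ = (c y)ⁿ = cⁿ yⁿ`, so `cⁿ = 1`, and torsion-freeness forces `c = 1`.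
-/

open scoped commutatorElement

variable {G : Type*} [Group G]

theorem Monoid.IsTorsionFree.eq_one_of_zpow_eq_one (htf : Monoid.IsTorsionFree G) {a : G}
    {n : ℤ} (hn : n ≠ 0) (h : a ^ n = 1) : a = 1 := by
  by_contra ha
  exact htf a ha (isOfFinOrder_iff_zpow_eq_one.mpr ⟨n, hn, h⟩)

theorem Commute.commutatorElement_right {a x y : G} (hx : Commute a x) (hy : Commute a y) :
    Commute a ⁅x, y⁆ := by
  rw [commutatorElement_def]
  exact ((hx.mul_right hy).mul_right hx.inv_right).mul_right hy.inv_right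

theorem commutatorElement_zpow_eq_one {v y : G} {n : ℤ} (hcy : Commute ⁅v, y⁆ y)
    (hv : Commute v (y ^ n)) : ⁅v, y⁆ ^ n = 1 := by
  have hconj : v * y * v⁻¹ = ⁅v, y⁆ * y := by
    rw [commutatorElement_def, inv_mul_cancel_right]
  have key : ⁅v, y⁆ ^ n * y ^ n = y ^ n :=
    calc ⁅v, y⁆ ^ n * y ^ n = (v * y * v⁻¹) ^ n := by rw [hconj, hcy.mul_zpow]
      _ = y ^ n := by rw [conj_zpow, hv.eq, mul_inv_cancel_right]
  exact mul_eq_right.mp key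

theorem commute_of_commute_zpow_of_mem_upperCentralSeries (htf : Monoid.IsTorsionFree G)
    {y : G} {n : ℤ} (hn : n ≠ 0) (k : ℕ) {v : G} (hvk : v ∈ Subgroup.upperCentralSeries G k)
    (hv : Commute v (y ^ n)) : Commute v y := by
  induction k generalizing v with
  | zero =>
    rw [Subgroup.upperCentralSeries_zero, Subgroup.mem_bot] at hvk
    exact hvk ▸ Commute.one_left y
  | succ k ih =>
    have hc : Commute ⁅v, y⁆ (y ^ n) :=
      (hv.symm.commutatorElement_right ((Commute.refl y).zpow_left n)).symm
    have hcy : Commute ⁅v, y⁆ y := ih (Subgroup.mem_upperCentralSeries_succ_iff.mp hvk y) hc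
    exact commutatorElement_eq_one_iff_commute.mp
      (htf.eq_one_of_zpow_eq_one hn (commutatorElement_zpow_eq_one hcy hv))

theorem commute_of_commute_zpow [Group.IsNilpotent G] (htf : Monoid.IsTorsionFree G)
    {v y : G} {n : ℤ} (hn : n ≠ 0) (hv : Commute v (y ^ n)) : Commute v y := by
  obtain ⟨k, hk⟩ := Group.IsNilpotent.nilpotent G
  exact commute_of_commute_zpow_of_mem_upperCentralSeries htf hn k (hk ▸ Subgroup.mem_top v) hv

/-- In a torsion-free nilpotent group, commuting of nontrivial powers implies
commuting of the elements. -/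
theorem commute_of_zpow_commute (G : Type) [Group G] [Group.IsNilpotent G]
    (htf : Monoid.IsTorsionFree G) (x y : G) (t n : ℤ) (ht : t ≠ 0) (hn : n ≠ 0)
    (h : x ^ t * y ^ n = y ^ n * x ^ t) : x * y = y * x := by
  have hxy : Commute (x ^ t) y := commute_of_commute_zpow htf hn h
  exact (commute_of_commute_zpow htf ht hxy.symm).symm.eq
end

section
/- Let G be a right-orderable group and A, B two finite nonempty subsets of G. Then there exist a₀ ∈ A and b₀ ∈ B such that a₀b₀ ≠ ab whenever (a, b) ∈ A × B with (a, b) ≠ (a₀, b₀). -/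
/-- A group is right-orderable if it carries a linear order invariant under right
multiplication. -/
def IsRightOrderable (G : Type) [Group G] : Prop :=
  ∃ _ : LinearOrder G, ∀ a b c : G, a ≤ b → a * c ≤ b * c

/-- In a right-orderable group, any two finite nonempty subsets `A`, `B` contain
elements `a₀ ∈ A`, `b₀ ∈ B` whose product `a₀b₀` is uniquely represented in `AB`. -/
theorem exists_unique_product (G : Type) [Group G] (hG : IsRightOrderable G)
    (A B : Finset G) (hA : A.Nonempty) (hB : B.Nonempty) :
    ∃ a₀ ∈ A, ∃ b₀ ∈ B, ∀ a ∈ A, ∀ b ∈ B, (a, b) ≠ (a₀, b₀) → a₀ * b₀ ≠ a * b := by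
  obtain ⟨lo, hlo⟩ := hG
  letI := lo
  obtain ⟨a₀, ha₀, ha₀max⟩ := A.exists_max_image (fun a => a) hA
  obtain ⟨b₀, hb₀, hb₀max⟩ := B.exists_max_image (fun b => a₀ * b) hB
  refine ⟨a₀, ha₀, b₀, hb₀, ?_⟩
  intro a ha b hb hne heq
  have h1 : a * b ≤ a₀ * b := hlo a a₀ b (ha₀max a ha)
  have h2 : a₀ * b ≤ a₀ * b₀ := hb₀max b hb
  have h3 : a * b = a₀ * b := le_antisymm h1 (heq ▸ h2)
  have ha' : a = a₀ := mul_right_cancel h3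
  have hb' : b = b₀ := mul_left_cancel (ha' ▸ heq.symm)
  exact hne (by rw [ha', hb'])
end

section
/- Let F be a free group with basis y₁,…,y_n, N ⊴ F with F/N a right-orderable group, and let S be a set of coset representatives of N in F. Suppose u, v ∈ ℤ[F] are written as u = Σ_p f_p A_p and v = Σ_q g_q B_q with f_p, g_q ∈ S pairwise distinct and A_p, B_q ∈ ℤ[N] nonzero. Then there exist indices p₀, q₀ with f_{p₀} g_{q₀} ≢ f_p g_q mod N whenever (p, q) ≠ (p₀, q₀). -/
/-- If `u = Σ_p f_p A_p`, `v = Σ_q g_q B_q` with distinct representatives `f_p, g_q ∈ S`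
and nonzero `A_p, B_q ∈ ℤ[N]`, and `F/N` is right-orderable, then some product
`f_{p₀} g_{q₀}` is in a coset mod `N` different from all other products `f_p g_q`. -/
theorem unique_coset_product (n : ℕ) (N : Subgroup (FreeGroup (Fin n))) (hN : N.Normal)
    (hord : IsRightOrderable (FreeGroup (Fin n) ⧸ N))
    (S : Set (FreeGroup (Fin n)))
    (hS : ∀ g : FreeGroup (Fin n), ∃! s, s ∈ S ∧ g⁻¹ * s ∈ N)
    (P Q : ℕ) (hP : 1 ≤ P) (hQ : 1 ≤ Q)
    (f : Fin P → FreeGroup (Fin n)) (g : Fin Q → FreeGroup (Fin n))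
    (hf : ∀ p, f p ∈ S) (hg : ∀ q, g q ∈ S)
    (hfinj : Function.Injective f) (hginj : Function.Injective g)
    (A : Fin P → MonoidAlgebra ℤ (FreeGroup (Fin n)))
    (B : Fin Q → MonoidAlgebra ℤ (FreeGroup (Fin n)))
    (hA : ∀ p, A p ≠ 0 ∧ A p ∈ Submodule.span ℤ
        (MonoidAlgebra.of ℤ (FreeGroup (Fin n)) '' (N : Set (FreeGroup (Fin n)))))
    (hB : ∀ q, B q ≠ 0 ∧ B q ∈ Submodule.span ℤ
        (MonoidAlgebra.of ℤ (FreeGroup (Fin n)) '' (N : Set (FreeGroup (Fin n)))))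
    (u v : MonoidAlgebra ℤ (FreeGroup (Fin n)))
    (hu : u = ∑ p, MonoidAlgebra.of ℤ (FreeGroup (Fin n)) (f p) * A p)
    (hv : v = ∑ q, MonoidAlgebra.of ℤ (FreeGroup (Fin n)) (g q) * B q) :
    ∃ p₀ q₀, ∀ p q, (p, q) ≠ (p₀, q₀) →
      (f p₀ * g q₀)⁻¹ * (f p * g q) ∉ N := by
  haveI := hN
  obtain ⟨lo, hlo⟩ := hord
  letI := lo
  let x : Fin P → FreeGroup (Fin n) ⧸ N := fun p => QuotientGroup.mk (f p)
  let y : Fin Q → FreeGroup (Fin n) ⧸ N := fun q => QuotientGroup.mk (g q)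
  have key : ∀ a b : FreeGroup (Fin n), a ∈ S → b ∈ S →
      (QuotientGroup.mk a : FreeGroup (Fin n) ⧸ N) = QuotientGroup.mk b → a = b := by
    intro a b ha hb hab
    obtain ⟨s, _, huniq⟩ := hS b
    have h1 : a = s := huniq a ⟨ha, by rw [← QuotientGroup.eq]; exact hab.symm⟩
    have h2 : b = s := huniq b ⟨hb, by rw [inv_mul_cancel]; exact N.one_mem⟩
    rw [h1, h2]
  have hxinj : Function.Injective x := fun p p' h =>
    hfinj (key _ _ (hf p) (hf p') h)
  have hyinj : Function.Injective y := fun q q' h =>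
    hginj (key _ _ (hg q) (hg q') h)
  have hlt : ∀ a b c : FreeGroup (Fin n) ⧸ N, a < b → a * c < b * c := by
    intro a b c hab
    rcases lt_or_eq_of_le (hlo a b c hab.le) with h | h
    · exact h
    · exact absurd (mul_right_cancel h) hab.ne
  haveI : Nonempty (Fin P) := ⟨⟨0, hP⟩⟩
  haveI : Nonempty (Fin Q) := ⟨⟨0, hQ⟩⟩
  obtain ⟨p₀, hp₀⟩ := Finite.exists_max x
  obtain ⟨q₀, hq₀⟩ := Finite.exists_max (fun q => x p₀ * y q)
  refine ⟨p₀, q₀, fun p q hne hmem => ?_⟩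
  have heq : x p₀ * y q₀ = x p * y q := by
    have := (QuotientGroup.eq (s := N)).mpr hmem
    simpa [x, y, QuotientGroup.mk_mul] using this
  by_cases hp : p = p₀
  · subst hp
    have : y q₀ = y q := mul_left_cancel heq
    exact hne (by rw [hyinj this.symm])
  · have h1 : x p < x p₀ := lt_of_le_of_ne (hp₀ p) (fun h => hp (hxinj h))
    have h2 : x p * y q < x p₀ * y q := hlt _ _ _ h1
    have h3 : x p₀ * y q ≤ x p₀ * y q₀ := hq₀ q
    exact absurd heq (ne_of_gt (lt_of_lt_of_le h2 h3))
end
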